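/- Let H be a complex Hilbert space, S a closed subspace, and α ∈ L(H) positive and invertible. Then H = S ∔ α(S^⊥) is a direct sum of subspaces and, denoting by P the bounded idempotent with range S and kernel α(S^⊥), the operator ã : S → S, ã(s) := P(αs), is invertible with inverse s ↦ P_S(α⁻¹s), and ã is a positive invertible operator on the Hilbert space S (⟨P(αs), s⟩ ≥ c‖s‖² for some c > 0 and all s ∈ S). -/

import Mathlib

/-!
Write `β = α⁻¹`. A strictly positive operator `T` on a Hilbert space is coercive,
`c ‖x‖² ≤ Re ⟪T x, x⟫` with `c > 0`, because its spectrum is a compact subset of `(0, ∞)`;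
conversely a coercive positive operator is invertible (Lax–Milgram). Hence the compression
`b = P_S β|_S` of the strictly positive `β` is strictly positive on `S`.

Coercivity of `α` makes `S ∩ α(Sᗮ) = 0`, and surjectivity of `b` gives `H = S + α(Sᗮ)`:
if `b s = P_S (β x)` then `β (x - s) ∈ Sᗮ`, so `x = s + α (β (x - s))`.
For the idempotent `P`, `α x - P (α x) ∈ ker P = α(Sᗮ)` shows `x - β (P (α x)) ∈ Sᗮ`, so
`b (P (α s)) = s` on `S`: the operator `ã` is `b⁻¹`, which is strictly positive and hence coercive.
-/

open ContinuousLinearMap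

noncomputable section

variable {H : Type*} [NormedAddCommGroup H] [InnerProductSpace ℂ H] [CompleteSpace H]

/-- The orthogonal projection onto a closed subspace `S`, as an endomorphism of `H`. -/
def projL (S : Submodule ℂ H) [Submodule.HasOrthogonalProjection S] : H →L[ℂ] H :=
  S.subtypeL.comp S.orthogonalProjectionOnto

/-- The corner `a = P_S B P_S` of the block decomposition of `B` w.r.t. `H = S ⊕ Sᗮ`. -/
def blockA (B : H →L[ℂ] H) (S : Submodule ℂ H) [Submodule.HasOrthogonalProjection S] : H →L[ℂ] H :=
  projL S * B * projL S

/-- The corner `b = P_S B P_{Sᗮ}` of the block decomposition of `B` w.r.t. `H = S ⊕ Sᗮ`. -/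
def blockB (B : H →L[ℂ] H) (S : Submodule ℂ H) [Submodule.HasOrthogonalProjection S] : H →L[ℂ] H :=
  projL S * B * (1 - projL S)

/-- The corner `c = P_{Sᗮ} B P_{Sᗮ}` of the block decomposition of `B` w.r.t. `H = S ⊕ Sᗮ`. -/
def blockC (B : H →L[ℂ] H) (S : Submodule ℂ H) [Submodule.HasOrthogonalProjection S] : H →L[ℂ] H :=
  (1 - projL S) * B * (1 - projL S)

/-- `m = |a|^{1/2}`: `m` is the (unique) positive fourth root of `a⋆ a`. -/
def IsSqrtAbs (a m : H →L[ℂ] H) : Prop :=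
  m.IsPositive ∧ m ^ 4 = adjoint a * a

/-- `B` is `S`-weakly complementable: `range b ⊆ range |a|^{1/2}`. -/
def IsWeaklyComplementable (B : H →L[ℂ] H) (S : Submodule ℂ H)
    [Submodule.HasOrthogonalProjection S] : Prop :=
  ∃ m : H →L[ℂ] H, IsSqrtAbs (blockA B S) m ∧
    LinearMap.range (blockB B S : H →ₗ[ℂ] H) ≤ LinearMap.range (m : H →ₗ[ℂ] H)

/-- `B` is `S`-complementable: `H = S + B⁻¹(Sᗮ)`. -/
def IsComplementable (B : H →L[ℂ] H) (S : Submodule ℂ H) : Prop :=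
  S ⊔ Sᗮ.comap (B : H →ₗ[ℂ] H) = ⊤

/-- The set `P(B,S)` of `B`-selfadjoint bounded idempotents onto `S`. -/
def projSet (B : H →L[ℂ] H) (S : Submodule ℂ H) : Set (H →L[ℂ] H) :=
  {Q | Q * Q = Q ∧ LinearMap.range (Q : H →ₗ[ℂ] H) = S ∧ B * Q = adjoint Q * B}

/-- `Y` is the Schur complement `B_{/S} = [[0,0],[0, c - f⋆ u f]]`, where `f` is the reduced
solution of `b = |a|^{1/2} x` and `a = u |a|` is the polar decomposition of `a`. -/
def IsSchur (B : H →L[ℂ] H) (S : Submodule ℂ H) [Submodule.HasOrthogonalProjection S]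
    (Y : H →L[ℂ] H) : Prop :=
  ∃ m u f : H →L[ℂ] H,
    IsSqrtAbs (blockA B S) m ∧
    LinearMap.ker (u : H →ₗ[ℂ] H) = LinearMap.ker (blockA B S : H →ₗ[ℂ] H) ∧
    (∀ x ∈ (LinearMap.ker (blockA B S : H →ₗ[ℂ] H))ᗮ, ‖u x‖ = ‖x‖) ∧
    blockA B S = u * m ^ 2 ∧
    m * f = blockB B S ∧
    LinearMap.range (f : H →ₗ[ℂ] H) ≤ (LinearMap.range (m : H →ₗ[ℂ] H)).topologicalClosure ∧
    Y = blockC B S - adjoint f * (u * f)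

/-- The set `M⁻(B,T)`. -/
def Mminus (B : H →L[ℂ] H) (T : Submodule ℂ H) : Set (H →L[ℂ] H) :=
  {X | IsSelfAdjoint X ∧ (B - X).IsPositive ∧ LinearMap.range (X : H →ₗ[ℂ] H) ≤ T}

/-- The set `M⁺(B,T)`. -/
def Mplus (B : H →L[ℂ] H) (T : Submodule ℂ H) : Set (H →L[ℂ] H) :=
  {X | IsSelfAdjoint X ∧ (X - B).IsPositive ∧ LinearMap.range (X : H →ₗ[ℂ] H) ≤ T}

/-- `Y` is the Loewner maximum of `M`. -/
def IsMaxOf (M : Set (H →L[ℂ] H)) (Y : H →L[ℂ] H) : Prop :=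
  Y ∈ M ∧ ∀ X ∈ M, (Y - X).IsPositive

/-- `Z` is the Loewner minimum of `M`. -/
def IsMinOf (M : Set (H →L[ℂ] H)) (Z : H →L[ℂ] H) : Prop :=
  Z ∈ M ∧ ∀ X ∈ M, (X - Z).IsPositive

/-- `Z` is the greatest lower bound of `M` in the Loewner order on selfadjoint operators. -/
def IsGLBOf (M : Set (H →L[ℂ] H)) (Z : H →L[ℂ] H) : Prop :=
  IsSelfAdjoint Z ∧ (∀ X ∈ M, (X - Z).IsPositive) ∧
    ∀ F : H →L[ℂ] H, IsSelfAdjoint F → (∀ X ∈ M, (X - F).IsPositive) → (Z - F).IsPositive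

/-- `Y` is the least upper bound of `M` in the Loewner order on selfadjoint operators. -/
def IsLUBOf (M : Set (H →L[ℂ] H)) (Y : H →L[ℂ] H) : Prop :=
  IsSelfAdjoint Y ∧ (∀ X ∈ M, (Y - X).IsPositive) ∧
    ∀ F : H →L[ℂ] H, IsSelfAdjoint F → (∀ X ∈ M, (F - X).IsPositive) → (F - Y).IsPositive

/-- A decomposition `S = S₊ ⊕_B S₋` into a `B`-nonnegative and a `B`-nonpositive part. -/
def IsWDecomp (B : H →L[ℂ] H) (S Sp Sm : Submodule ℂ H) : Prop :=
  (∀ x ∈ Sp, ∀ y ∈ Sm, (inner ℂ x y : ℂ) = 0) ∧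
  Sp ⊔ Sm = S ∧
  (∀ x ∈ Sp, 0 ≤ (inner ℂ (B x) x : ℂ).re) ∧
  (∀ x ∈ Sm, (inner ℂ (B x) x : ℂ).re ≤ 0) ∧
  (∀ x ∈ Sp, ∀ y ∈ Sm, (inner ℂ (B x) y : ℂ) = 0)

/-- `Y` is Krein's shorted operator `B_{/T}` of the positive operator `B` to `T`:
the Loewner maximum of `{X : 0 ≤ X ≤ B, range X ⊆ Tᗮ}`. -/
def IsShort (B : H →L[ℂ] H) (T : Submodule ℂ H) (Y : H →L[ℂ] H) : Prop :=
  (Y.IsPositive ∧ (B - Y).IsPositive ∧ LinearMap.range (Y : H →ₗ[ℂ] H) ≤ Tᗮ) ∧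
    ∀ X : H →L[ℂ] H, X.IsPositive → (B - X).IsPositive → LinearMap.range (X : H →ₗ[ℂ] H) ≤ Tᗮ →
      (Y - X).IsPositive

/-- The set `{R⋆ Q⋆ B Q R : Q² = Q, N(Q) = T}`. -/
def comprSet2 (B R : H →L[ℂ] H) (T : Submodule ℂ H) : Set (H →L[ℂ] H) :=
  {X | ∃ Q : H →L[ℂ] H, Q * Q = Q ∧ LinearMap.ker (Q : H →ₗ[ℂ] H) = T ∧
    X = adjoint R * (adjoint Q * B * Q) * R}

/-- The set `{Q⋆ B Q : Q² = Q, N(Q) = S}`. -/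
def comprSet1 (B : H →L[ℂ] H) (S : Submodule ℂ H) : Set (H →L[ℂ] H) :=
  {X | ∃ Q : H →L[ℂ] H, Q * Q = Q ∧ LinearMap.ker (Q : H →ₗ[ℂ] H) = S ∧ X = adjoint Q * B * Q}

/-- The set `N⁻(W,T)` of the Krein space `(H, [x,y] = ⟨Jx,y⟩)`. -/
def Nminus (J W : H →L[ℂ] H) (T : Submodule ℂ H) : Set (H →L[ℂ] H) :=
  {X | IsSelfAdjoint (J * X) ∧ (J * (W - X)).IsPositive ∧ LinearMap.range (X : H →ₗ[ℂ] H) ≤ T}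

/-- The set `N⁺(W,T)` of the Krein space `(H, [x,y] = ⟨Jx,y⟩)`. -/
def Nplus (J W : H →L[ℂ] H) (T : Submodule ℂ H) : Set (H →L[ℂ] H) :=
  {X | IsSelfAdjoint (J * X) ∧ (J * (X - W)).IsPositive ∧ LinearMap.range (X : H →ₗ[ℂ] H) ≤ T}

/-- `Y` is the maximum of `M` in the Krein order induced by `J`. -/
def KMaxOf (J : H →L[ℂ] H) (M : Set (H →L[ℂ] H)) (Y : H →L[ℂ] H) : Prop :=
  Y ∈ M ∧ ∀ X ∈ M, (J * (Y - X)).IsPositive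

/-- `Z` is the minimum of `M` in the Krein order induced by `J`. -/
def KMinOf (J : H →L[ℂ] H) (M : Set (H →L[ℂ] H)) (Z : H →L[ℂ] H) : Prop :=
  Z ∈ M ∧ ∀ X ∈ M, (J * (X - Z)).IsPositive

/-- `E` is a densely defined projection (idempotent) with kernel `N`. -/
def IsDDProj (N : Submodule ℂ H) (E : H →ₗ.[ℂ] H) : Prop :=
  Dense (E.domain : Set H) ∧
  (∃ h : ∀ x : E.domain, E x ∈ E.domain, ∀ x : E.domain, E ⟨E x, h x⟩ = E x) ∧
  (LinearMap.ker E.toFun).map E.domain.subtype = N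

/-- `G` is the (everywhere defined, bounded) composition `E ∘ T`; in particular
`range T ⊆ dom E`. -/
def IsBddComp (E : H →ₗ.[ℂ] H) (T G : H →L[ℂ] H) : Prop :=
  ∃ h : ∀ x : H, T x ∈ E.domain, ∀ x : H, G x = E ⟨T x, h x⟩

section RingInverse

variable {R M : Type*} [Semiring R] [TopologicalSpace M] [AddCommMonoid M] [Module R M]
  {T : M →L[R] M}

theorem ringInverse_apply_apply (hT : IsUnit T) (x : M) : Ring.inverse T (T x) = x := by
  rw [← mul_apply_eq_comp, Ring.inverse_mul_cancel T hT, one_apply_eq_self]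

theorem apply_ringInverse_apply (hT : IsUnit T) (x : M) : T (Ring.inverse T x) = x := by
  rw [← mul_apply_eq_comp, Ring.mul_inverse_cancel T hT, one_apply_eq_self]

end RingInverse

open scoped InnerProductSpace

section CoerciveOperators

variable {E : Type*} [NormedAddCommGroup E] [InnerProductSpace ℂ E]

theorem isStrictlyPositive_iff_exists_pos_mul_norm_sq_le [CompleteSpace E] {T : E →L[ℂ] E} :
    IsStrictlyPositive T ↔ T.IsPositive ∧ ∃ c > 0, ∀ x, c * ‖x‖ ^ 2 ≤ (⟪T x, x⟫_ℂ).re := by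
  refine ⟨fun hT => ⟨(nonneg_iff_isPositive T).1 hT.nonneg, ?_⟩, fun ⟨hT, c, hc, hcT⟩ => ?_⟩
  · rcases subsingleton_or_nontrivial E with hE | hE
    · exact ⟨1, one_pos, fun x => by simp [Subsingleton.elim x 0]⟩
    obtain ⟨c, hc, hcT⟩ : ∃ c > 0, algebraMap ℝ (E →L[ℂ] E) c ≤ T :=
      (CFC.exists_pos_algebraMap_le_iff hT.isSelfAdjoint).2 fun _ hx => hT.spectrum_pos hx
    refine ⟨c, hc, fun x => ?_⟩
    have hcx : algebraMap ℝ (E →L[ℂ] E) c x = (c : ℂ) • x := rfl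
    have := ((le_def _ _).1 hcT).re_inner_nonneg_left x
    rw [sub_apply, inner_sub_left, map_sub, hcx, inner_smul_left, inner_self_eq_norm_sq_to_K]
      at this
    simpa [← Complex.ofReal_pow] using this
  · refine ⟨(nonneg_iff_isPositive T).2 hT,
      isUnit_of_forall_le_norm_inner_map T (c := ⟨c, hc.le⟩) hc fun x => ?_⟩
    exact (mul_comm c _ ▸ hcT x).trans (Complex.re_le_norm _)

-- Applied below with `E := S`, where instance search does not find the continuous functional
-- calculus of `S →L[ℂ] S` that `IsStrictlyPositive.ringInverse` needs.
theorem IsStrictlyPositive.exists_pos_mul_norm_sq_le_re_inner_ringInverse [CompleteSpace E]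
    {T : E →L[ℂ] E} (hT : IsStrictlyPositive T) :
    ∃ c > 0, ∀ x, c * ‖x‖ ^ 2 ≤ (⟪Ring.inverse T x, x⟫_ℂ).re :=
  (isStrictlyPositive_iff_exists_pos_mul_norm_sq_le.1 hT.ringInverse).2

variable (S : Submodule ℂ E) [S.HasOrthogonalProjection]

def compression (B : E →L[ℂ] E) : S →L[ℂ] S :=
  S.orthogonalProjectionOnto ∘L B ∘L S.subtypeL

theorem inner_compression_apply_self (B : E →L[ℂ] E) (s : S) :
    ⟪compression S B s, s⟫_ℂ = ⟪B s, s⟫_ℂ :=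
  S.inner_orthogonalProjectionOnto_eq_of_mem_right s (B s)

theorem IsStrictlyPositive.compression [CompleteSpace E] [CompleteSpace S] {B : E →L[ℂ] E}
    (hB : IsStrictlyPositive B) : IsStrictlyPositive (compression S B) := by
  obtain ⟨hBpos, c, hc, hcB⟩ := isStrictlyPositive_iff_exists_pos_mul_norm_sq_le.1 hB
  refine isStrictlyPositive_iff_exists_pos_mul_norm_sq_le.2
    ⟨hBpos.orthogonalProjectionOnto_comp S, c, hc, fun s => ?_⟩
  rw [inner_compression_apply_self]
  exact hcB s

end CoerciveOperators

section ObliqueComplement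

variable {E : Type*} [NormedAddCommGroup E] [InnerProductSpace ℂ E] [CompleteSpace E]
  {T : E →L[ℂ] E} (S : Submodule ℂ E)

theorem inf_map_orthogonal_eq_bot (hT : IsStrictlyPositive T) :
    S ⊓ Sᗮ.map (T : E →ₗ[ℂ] E) = ⊥ := by
  obtain ⟨-, c, hc, hcT⟩ := isStrictlyPositive_iff_exists_pos_mul_norm_sq_le.1 hT
  rw [Submodule.eq_bot_iff]
  rintro _ ⟨hwS, w, hw, rfl⟩
  have hTw : ⟪T w, w⟫_ℂ = 0 := Submodule.inner_right_of_mem_orthogonal hwS hw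
  have : c * ‖w‖ ^ 2 ≤ 0 := by simpa [hTw] using hcT w
  have hw0 : w = 0 := by
    simpa using le_antisymm (nonpos_of_mul_nonpos_right this hc) (sq_nonneg ‖w‖)
  simp [hw0]

theorem sup_map_orthogonal_eq_top [CompleteSpace S] (hT : IsStrictlyPositive T) :
    S ⊔ Sᗮ.map (T : E →ₗ[ℂ] E) = ⊤ := by
  set β := Ring.inverse T
  have hsurj : Function.Surjective (compression S β) :=
    (isUnit_iff_bijective.1 (hT.ringInverse.compression S).isUnit).2
  rw [Submodule.eq_top_iff']
  intro x
  obtain ⟨s, hs⟩ := hsurj (S.orthogonalProjectionOnto (β x))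
  have hperp : β (x - s) ∈ Sᗮ := by
    rw [← Submodule.orthogonalProjectionOnto_eq_zero_iff, map_sub, map_sub]
    exact sub_eq_zero.2 hs.symm
  exact Submodule.mem_sup.2 ⟨s, s.2, T (β (x - s)), Submodule.mem_map_of_mem hperp, by
    rw [apply_ringInverse_apply hT.isUnit, add_sub_cancel]⟩

end ObliqueComplement

section ObliqueProjection

variable {E : Type*} [NormedAddCommGroup E] [InnerProductSpace ℂ E]
  {T P : E →L[ℂ] E} {S : Submodule ℂ E}

theorem sub_ringInverse_apply_mem_orthogonal (hT : IsUnit T) (hP : P * P = P)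
    (hker : LinearMap.ker (P : E →ₗ[ℂ] E) = Sᗮ.map (T : E →ₗ[ℂ] E)) (x : E) :
    x - Ring.inverse T (P (T x)) ∈ Sᗮ := by
  have hmem : T x - P (T x) ∈ LinearMap.ker (P : E →ₗ[ℂ] E) := by
    rw [LinearMap.mem_ker, coe_coe, map_sub, ← mul_apply_eq_comp P P, hP, sub_self]
  rw [hker] at hmem
  obtain ⟨w, hw, hTw⟩ := hmem
  have hxw : x - Ring.inverse T (P (T x)) = w := by
    rw [← ringInverse_apply_apply hT x, ← map_sub, ringInverse_apply_apply hT, ← hTw]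
    exact ringInverse_apply_apply hT w
  exact hxw ▸ hw

theorem starProjection_ringInverse_apply [S.HasOrthogonalProjection] (hT : IsUnit T)
    (hP : P * P = P) (hker : LinearMap.ker (P : E →ₗ[ℂ] E) = Sᗮ.map (T : E →ₗ[ℂ] E))
    {s : E} (hs : s ∈ S) :
    S.starProjection (Ring.inverse T (P (T s))) = s := by
  refine Submodule.eq_starProjection_of_mem_orthogonal hs ?_
  rw [← neg_sub]
  exact Sᗮ.neg_mem (sub_ringInverse_apply_mem_orthogonal hT hP hker s)

theorem apply_eq_ringInverse_compression [CompleteSpace E] [CompleteSpace S]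
    (hT : IsStrictlyPositive T) (hP : P * P = P)
    (hran : LinearMap.range (P : E →ₗ[ℂ] E) = S)
    (hker : LinearMap.ker (P : E →ₗ[ℂ] E) = Sᗮ.map (T : E →ₗ[ℂ] E)) (s : S) :
    P (T s) = Ring.inverse (compression S (Ring.inverse T)) s := by
  set b := compression S (Ring.inverse T)
  have hPTs : P (T s) ∈ S := hran ▸ LinearMap.mem_range_self (P : E →ₗ[ℂ] E) (T s)
  have hb : b ⟨P (T s), hPTs⟩ = s :=
    Subtype.ext (starProjection_ringInverse_apply hT.isUnit hP hker s.2)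
  have := ringInverse_apply_apply (hT.ringInverse.compression S).isUnit ⟨P (T s), hPTs⟩
  rw [hb] at this
  exact congrArg Subtype.val this.symm

end ObliqueProjection

/-- For positive invertible `α`, `H = S ∔ α(Sᗮ)`, and the compression `ã : S → S`,
`ã s = P(α s)` (with `P` the idempotent onto `S` along `α(Sᗮ)`), is invertible with inverse
`s ↦ P_S(α⁻¹ s)` and is a positive invertible operator on `S`. -/
theorem stmt_14 (α : H →L[ℂ] H) (hα : α.IsPositive) (hαu : IsUnit α)
    (S : Submodule ℂ H) [CompleteSpace S] :
    (S ⊓ Sᗮ.map (α : H →ₗ[ℂ] H) = ⊥ ∧ S ⊔ Sᗮ.map (α : H →ₗ[ℂ] H) = ⊤) ∧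
    ∀ P : H →L[ℂ] H, P * P = P → LinearMap.range (P : H →ₗ[ℂ] H) = S → LinearMap.ker (P : H →ₗ[ℂ] H) = Sᗮ.map (α : H →ₗ[ℂ] H) →
      (∀ s ∈ S, projL S (Ring.inverse α (P (α s))) = s) ∧
      (∀ s ∈ S, P (α (projL S (Ring.inverse α s))) = s) ∧
      (∃ c : ℝ, 0 < c ∧ ∀ s ∈ S, c * ‖s‖ ^ 2 ≤ (inner ℂ (P (α s)) s : ℂ).re) := by
  have hαpos : IsStrictlyPositive α := hαu.isStrictlyPositive ((nonneg_iff_isPositive α).2 hα)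
  have hcompr := (hαpos.ringInverse.compression S).isUnit
  refine ⟨⟨inf_map_orthogonal_eq_bot S hαpos, sup_map_orthogonal_eq_top S hαpos⟩,
    fun P hP hran hker => ⟨fun s hs => starProjection_ringInverse_apply hαu hP hker hs,
      fun s hs => ?_, ?_⟩⟩
  · have := apply_eq_ringInverse_compression hαpos hP hran hker
      (compression S (Ring.inverse α) ⟨s, hs⟩)
    rwa [ringInverse_apply_apply hcompr] at this
  · obtain ⟨c, hc, hcoer⟩ :=
      (hαpos.ringInverse.compression S).exists_pos_mul_norm_sq_le_re_inner_ringInverse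
    refine ⟨c, hc, fun s hs => ?_⟩
    rw [apply_eq_ringInverse_compression hαpos hP hran hker ⟨s, hs⟩]
    exact hcoer ⟨s, hs⟩
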